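/- Every two-dimensional left Bol algebra (T,*,[[·,·,·]]) over ℝ has a basis {e₁,e₂} such that the multiplication table is of one of the following types (all other products of basis elements being determined by bilinearity, trilinearity, antisymmetry of * and the antisymmetry (T02)): Type I: e₁*e₂ = 0, [[e₁,e₂,e₁]] = ε₂e₂, [[e₁,e₂,e₂]] = -ε₁e₁, where (ε₁,ε₂) ∈ {(0,0), (1,0), (-1,0), (1,1), (1,-1), (-1,-1)}; Type II(i): e₁*e₂ = -e₂, [[e₁,e₂,e₁]] = βe₂ for some β ∈ ℝ, [[e₁,e₂,e₂]] = -εe₁ with ε ∈ {0,1,-1}; Type II(ii): e₁*e₂ = -e₂, [[e₁,e₂,e₁]] = e₁, [[e₁,e₂,e₂]] = -e₂. -/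

import Mathlib

/-!
In a plane an alternating bilinear map is determined by its value on one basis, so
`x * y = ω x y • w` and `[[x, y, ·]] = ω x y • D` for the area form `ω` of a basis, a vector `w`
and an endomorphism `D`; passing to another basis `e₁, e₂` multiplies both by `ω e₁ e₂`.
Identity (T2) makes `D` skew-adjoint for `ω`, i.e. traceless, hence `D² = k` for a scalar `k`.
The type is then read off from `w` and the quadratic form `v ↦ ω v (D v)`: type I when `w = 0`
(according to `D = 0`, `k = 0` and the sign of `k`), type II(i) when `ω w (D w) ≠ 0` or `D w = 0`,
and type II(ii) when `w` is an eigenvector of `D` with nonzero eigenvalue.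
-/

/-- A left Bol algebra over ℝ: a real vector space with a bilinear operation `mul`
and a trilinear operation `tri` satisfying (T01), (T02), (T1), (T2) and (T3). -/
structure LeftBolAlgebra (T : Type*) [AddCommGroup T] [Module ℝ T] where
  mul : T →ₗ[ℝ] T →ₗ[ℝ] T
  tri : T →ₗ[ℝ] T →ₗ[ℝ] T →ₗ[ℝ] T
  mul_anticomm : ∀ x y : T, mul x y = - mul y x
  tri_skew : ∀ x y z : T, tri x y z = - tri y x z
  tri_cyclic : ∀ x y z : T, tri x y z + tri y z x + tri z x y = 0
  tri_leibniz : ∀ u v x y z : T,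
    tri u v (tri x y z) = tri (tri u v x) y z + tri x (tri u v y) z + tri x y (tri u v z)
  bol : ∀ u v x y : T, tri u v (mul x y) =
    mul (tri u v x) y + mul x (tri u v y) + tri x y (mul u v) - mul (mul x y) (mul u v)

section AreaForm

variable {K V M : Type*} [Field K] [AddCommGroup V] [Module K V] [AddCommGroup M] [Module K M]

/-- `smul_eq` is Cramer's rule in a plane; it forces `dim V ≤ 2`, so an area form is a volume form
on a plane. -/
structure IsAreaForm (ω : V →ₗ[K] V →ₗ[K] K) : Prop where
  isAlt : ω.IsAlt
  separatingLeft : ω.SeparatingLeft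
  smul_eq : ∀ x y z, ω x y • z = ω z y • x + ω x z • y

namespace IsAreaForm

variable {ω : V →ₗ[K] V →ₗ[K] K}

lemma swap (hω : IsAreaForm ω) (x y : V) : ω y x = -ω x y := (hω.isAlt.neg x y).symm

lemma linearIndependent (hω : IsAreaForm ω) {x y : V} (h : ω x y ≠ 0) :
    LinearIndependent K ![x, y] := by
  rw [LinearIndependent.pair_iff]
  intro s t hst
  have h₁ := congrArg (ω · y) hst
  have h₂ := congrArg (ω x) hst
  simp only [map_add, map_smul, LinearMap.add_apply, LinearMap.smul_apply, smul_eq_mul,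
    hω.isAlt.self_eq_zero, map_zero, LinearMap.zero_apply, mul_zero, add_zero, zero_add] at h₁ h₂
  exact ⟨(mul_eq_zero.1 h₁).resolve_right h, (mul_eq_zero.1 h₂).resolve_right h⟩

lemma span_eq_top (hω : IsAreaForm ω) {x y : V} (h : ω x y ≠ 0) :
    Submodule.span K {x, y} = ⊤ :=
  eq_top_iff.2 fun z _ => Submodule.mem_span_pair.2 ⟨(ω x y)⁻¹ * ω z y, (ω x y)⁻¹ * ω x z, by
    rw [mul_smul, mul_smul, ← smul_add, ← hω.smul_eq, inv_smul_smul₀ h]⟩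

lemma exists_apply_ne_zero (hω : IsAreaForm ω) {x : V} (hx : x ≠ 0) : ∃ y, ω x y ≠ 0 := by
  by_contra! h
  exact hx (hω.separatingLeft x h)

lemma exists_ne_zero [Nontrivial V] (hω : IsAreaForm ω) : ∃ x y, ω x y ≠ 0 :=
  let ⟨_, hx⟩ := exists_ne (0 : V)
  ⟨_, hω.exists_apply_ne_zero hx⟩

lemma exists_apply_eq (hω : IsAreaForm ω) {x : V} (hx : x ≠ 0) (c : K) : ∃ y, ω y x = c := by
  obtain ⟨y, hy⟩ := hω.exists_apply_ne_zero hx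
  refine ⟨(-(c / ω x y)) • y, ?_⟩
  rw [map_smul, LinearMap.smul_apply, hω.swap x y, smul_eq_mul]
  field_simp

lemma exists_smul_eq (hω : IsAreaForm ω) {x y : V} (hx : x ≠ 0) (h : ω x y = 0) :
    ∃ a : K, a • x = y := by
  obtain ⟨z, hz⟩ := hω.exists_apply_ne_zero hx
  refine ⟨(ω x z)⁻¹ * ω y z, ?_⟩
  have := hω.smul_eq x z y
  rw [h, zero_smul, add_zero] at this
  rw [mul_smul, ← this, inv_smul_smul₀ hz]

lemma not_linearIndependent (hω : IsAreaForm ω) {x y : V} (h : ω x y = 0) :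
    ¬LinearIndependent K ![x, y] := by
  rcases eq_or_ne x 0 with rfl | hx
  · exact fun hli => hli.ne_zero 0 rfl
  · simp only [LinearIndependent.pair_iff' hx, not_forall, not_not]
    exact hω.exists_smul_eq hx h

lemma apply_eq_smul (hω : IsAreaForm ω) {B : V →ₗ[K] V →ₗ[K] M} (hB : B.IsAlt) {a b : V}
    (hab : ω a b = 1) (x y : V) : B x y = ω x y • B a b := by
  have expand : ∀ z, z = ω z b • a + ω a z • b := fun z => by rw [← hω.smul_eq, hab, one_smul]
  have hxy : ω x y = ω y b * ω x a + ω a y * ω x b := by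
    conv_lhs => rw [expand y]
    simp
  conv_lhs => rw [expand x, expand y]
  simp only [map_add, map_smul, LinearMap.add_apply, LinearMap.smul_apply, hB.self_eq_zero,
    ← hB.neg a b]
  rw [hxy, hω.swap x a]
  module

end IsAreaForm

namespace Module.Basis

variable (b : Basis (Fin 2) K V)

noncomputable def areaForm : V →ₗ[K] V →ₗ[K] K :=
  (LinearMap.mul K K).compl₁₂ (b.coord 0) (b.coord 1) -
    (LinearMap.mul K K).compl₁₂ (b.coord 1) (b.coord 0)

lemma areaForm_apply (x y : V) :
    b.areaForm x y = b.repr x 0 * b.repr y 1 - b.repr x 1 * b.repr y 0 := rfl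

lemma areaForm_apply_zero_one : b.areaForm (b 0) (b 1) = 1 := by
  simp [areaForm_apply]

lemma isAreaForm_areaForm : IsAreaForm b.areaForm where
  isAlt x := by simp [areaForm_apply, mul_comm]
  separatingLeft x hx := by
    have h₀ := hx (b 0)
    have h₁ := hx (b 1)
    simp only [areaForm_apply, repr_self] at h₀ h₁
    simp at h₀ h₁
    exact b.ext_elem fun i => by fin_cases i <;> simp [h₀, h₁]
  smul_eq x y z := b.ext_elem fun i => by
    fin_cases i <;> simp [areaForm_apply] <;> ring

end Module.Basis

end AreaForm

section SkewAdjoint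

variable {K V : Type*} [Field K] [AddCommGroup V] [Module K V] {ω : V →ₗ[K] V →ₗ[K] K}
  {D : V →ₗ[K] V}

lemma IsAreaForm.exists_forall_apply_apply_eq_smul (hω : IsAreaForm ω) (hD : ω.IsSkewAdjoint D) :
    ∃ k : K, ∀ z, D (D z) = k • z := by
  obtain ⟨k, hk⟩ := LinearMap.exists_eq_smul_id_of_forall_notLinearIndependent (f := D * D)
    fun v => hω.not_linearIndependent (by
      rw [hω.swap, Module.End.mul_apply, hD (D v) v, Pi.neg_apply, map_neg, hω.isAlt.self_eq_zero,
        neg_zero, neg_zero])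
  exact ⟨k, fun z => by simpa using LinearMap.congr_fun hk z⟩

lemma IsAreaForm.exists_apply_apply_ne_zero [NeZero (2 : K)] (hω : IsAreaForm ω)
    (hD : ω.IsSkewAdjoint D) (hD₀ : D ≠ 0) : ∃ v, ω v (D v) ≠ 0 := by
  by_contra! h
  refine hD₀ (LinearMap.ext fun y => hω.separatingLeft _ fun x => ?_)
  have hxy := h (x + y)
  rw [map_add, map_add, LinearMap.add_apply, map_add, map_add, h x, h y] at hxy
  have hsymm : ω y (D x) = ω x (D y) := by
    rw [hω.swap (D x) y, hD x y, Pi.neg_apply, map_neg, neg_neg]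
  have htwice : (2 : K) * ω x (D y) = 0 := by linear_combination hxy - hsymm
  rw [hω.swap, neg_eq_zero]
  exact (mul_eq_zero.1 htwice).resolve_left two_ne_zero

end SkewAdjoint

section NormalForm

variable {V : Type*} [AddCommGroup V] [Module ℝ V]

-- The multiplication tables in a basis `e₁, e₂`, with `μ = e₁ * e₂` and `τ = [[e₁, e₂, ·]]`.
def IsBolTypeI (μ : V) (τ : V → V) (e₁ e₂ : V) : Prop :=
  ∃ ε₁ ε₂ : ℝ,
    ((ε₁, ε₂) = ((0 : ℝ), (0 : ℝ)) ∨ (ε₁, ε₂) = (1, 0) ∨ (ε₁, ε₂) = (-1, 0) ∨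
      (ε₁, ε₂) = (1, 1) ∨ (ε₁, ε₂) = (1, -1) ∨ (ε₁, ε₂) = (-1, -1)) ∧
    μ = 0 ∧ τ e₁ = ε₂ • e₂ ∧ τ e₂ = -ε₁ • e₁

def IsBolTypeIIi (μ : V) (τ : V → V) (e₁ e₂ : V) : Prop :=
  ∃ β ε : ℝ, (ε = 0 ∨ ε = 1 ∨ ε = -1) ∧ μ = -e₂ ∧ τ e₁ = β • e₂ ∧ τ e₂ = -ε • e₁

def IsBolTypeIIii (μ : V) (τ : V → V) (e₁ e₂ : V) : Prop :=
  μ = -e₂ ∧ τ e₁ = e₁ ∧ τ e₂ = -e₂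

def IsBolNormalForm (μ : V) (τ : V → V) (e₁ e₂ : V) : Prop :=
  IsBolTypeI μ τ e₁ e₂ ∨ IsBolTypeIIi μ τ e₁ e₂ ∨ IsBolTypeIIii μ τ e₁ e₂

lemma Real.exists_sq_mul_eq_one_or_eq_neg_one {x : ℝ} (hx : x ≠ 0) :
    ∃ m : ℝ, m ^ 2 * x = 1 ∨ m ^ 2 * x = -1 := by
  refine ⟨(√|x|)⁻¹, ?_⟩
  rw [inv_pow, Real.sq_sqrt (abs_nonneg x)]
  rcases abs_choice x with h | h <;> rw [h] <;> field_simp <;> simp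

variable {ω : V →ₗ[ℝ] V →ₗ[ℝ] ℝ} {D : V →ₗ[ℝ] V}

lemma IsAreaForm.exists_isBolTypeI_of_sq_eq_zero (hω : IsAreaForm ω) (hD₂ : ∀ z, D (D z) = 0)
    {v : V} (hv : ω v (D v) ≠ 0) :
    ∃ e₁ e₂ : V, ω e₁ e₂ ≠ 0 ∧ IsBolTypeI 0 ⇑(ω e₁ e₂ • D) e₁ e₂ := by
  obtain ⟨m, hm⟩ := Real.exists_sq_mul_eq_one_or_eq_neg_one hv
  have hδ : ω (m • D v) (m • v) = -(m ^ 2 * ω v (D v)) := by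
    simp only [map_smul, LinearMap.smul_apply, smul_eq_mul, hω.swap v (D v)]
    ring
  refine ⟨m • D v, m • v, ?_, m ^ 2 * ω v (D v), 0, ?_, rfl, ?_, ?_⟩
  · rw [hδ]
    rcases hm with h | h <;> simp [h]
  · rcases hm with h | h <;> simp [h]
  · simp [hD₂]
  · rw [LinearMap.smul_apply, hδ, map_smul]

lemma exists_isBolTypeI_of_sq_eq_smul {k : ℝ} (hk : k ≠ 0)
    (hD₂ : ∀ z, D (D z) = k • z) {v : V} (hv : ω v (D v) ≠ 0) (hsign : 0 < k → ω v (D v) < 0) :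
    ∃ e₁ e₂ : V, ω e₁ e₂ ≠ 0 ∧ IsBolTypeI 0 ⇑(ω e₁ e₂ • D) e₁ e₂ := by
  obtain ⟨m, hm⟩ := Real.exists_sq_mul_eq_one_or_eq_neg_one hv
  obtain ⟨n, hn⟩ := Real.exists_sq_mul_eq_one_or_eq_neg_one hk
  have hδ : ω (m • v) ((m * n) • D v) = m ^ 2 * n * ω v (D v) := by
    simp only [map_smul, LinearMap.smul_apply, smul_eq_mul]
    ring
  have hm₀ : m ≠ 0 := by rintro rfl; rcases hm with h | h <;> norm_num at h
  have hn₀ : n ≠ 0 := by rintro rfl; rcases hn with h | h <;> norm_num at h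
  refine ⟨m • v, (m * n) • D v, by rw [hδ]; positivity, -(m ^ 2 * ω v (D v) * (n ^ 2 * k)),
    m ^ 2 * ω v (D v), ?_, rfl, ?_, ?_⟩
  · rcases hm with h | h <;> rcases hn with h' | h' <;> simp only [h, h'] <;> norm_num
    -- the remaining case `m² ω v (D v) = n² k = 1` is excluded by `hsign`
    have : 0 < k := by nlinarith [sq_nonneg n]
    nlinarith [sq_nonneg m, hsign this]
  · rw [LinearMap.smul_apply, hδ, map_smul]
    module
  · rw [LinearMap.smul_apply, hδ, map_smul, hD₂]
    module

lemma IsAreaForm.exists_isBolTypeI [Nontrivial V] (hω : IsAreaForm ω) (hD : ω.IsSkewAdjoint D) :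
    ∃ e₁ e₂ : V, ω e₁ e₂ ≠ 0 ∧ IsBolTypeI 0 ⇑(ω e₁ e₂ • D) e₁ e₂ := by
  rcases eq_or_ne D 0 with rfl | hD₀
  · obtain ⟨x, y, hxy⟩ := hω.exists_ne_zero
    exact ⟨x, y, hxy, 0, 0, Or.inl rfl, rfl, by simp, by simp⟩
  obtain ⟨k, hk⟩ := hω.exists_forall_apply_apply_eq_smul hD
  obtain ⟨v, hv⟩ := hω.exists_apply_apply_ne_zero hD hD₀
  rcases eq_or_ne k 0 with rfl | hk₀
  · exact hω.exists_isBolTypeI_of_sq_eq_zero (by simpa using hk) hv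
  -- `D` multiplies the quadratic form `v ↦ ω v (D v)` by `-k`, so for `k > 0` it flips its sign
  have hDv : ω (D v) (D (D v)) = -k * ω v (D v) := by
    rw [hk, map_smul, smul_eq_mul, hω.swap (D v)]
    ring
  by_cases hpos : 0 < k ∧ 0 < ω v (D v)
  · refine exists_isBolTypeI_of_sq_eq_smul hk₀ hk (v := D v) ?_ fun _ => ?_ <;> rw [hDv]
    · exact mul_ne_zero (neg_ne_zero.2 hk₀) hv
    · nlinarith
  · refine exists_isBolTypeI_of_sq_eq_smul hk₀ hk hv fun hk' => ?_
    exact lt_of_le_of_ne (not_lt.1 fun h => hpos ⟨hk', h⟩) hv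

lemma IsAreaForm.exists_isBolTypeIIi_of_apply_apply_ne_zero (hω : IsAreaForm ω) {k : ℝ}
    (hD₂ : ∀ z, D (D z) = k • z) {w : V} (hw : ω w (D w) ≠ 0) :
    ∃ e₁ e₂ : V, ω e₁ e₂ ≠ 0 ∧ IsBolTypeIIi (ω e₁ e₂ • w) ⇑(ω e₁ e₂ • D) e₁ e₂ := by
  obtain ⟨m, hm⟩ := Real.exists_sq_mul_eq_one_or_eq_neg_one hw
  have hm₀ : m ≠ 0 := by rintro rfl; rcases hm with h | h <;> norm_num at h
  have hδ : ω ((ω w (D w))⁻¹ • D w) (m • w) = -m := by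
    simp only [map_smul, LinearMap.smul_apply, smul_eq_mul, hω.swap w (D w)]
    field_simp
  refine ⟨(ω w (D w))⁻¹ • D w, m • w, by rw [hδ]; exact neg_ne_zero.2 hm₀,
    -((ω w (D w))⁻¹ * k), m ^ 2 * ω w (D w), ?_, ?_, ?_, ?_⟩
  · rcases hm with h | h <;> simp [h]
  · rw [hδ]
    module
  · rw [LinearMap.smul_apply, hδ, map_smul, hD₂]
    module
  · rw [LinearMap.smul_apply, hδ, map_smul]
    match_scalars
    field_simp

lemma IsAreaForm.exists_isBolTypeIIi_of_apply_eq_zero (hω : IsAreaForm ω) (hD : ω.IsSkewAdjoint D)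
    {w : V} (hw : w ≠ 0) (hDw : D w = 0) :
    ∃ e₁ e₂ : V, ω e₁ e₂ ≠ 0 ∧ IsBolTypeIIi (ω e₁ e₂ • w) ⇑(ω e₁ e₂ • D) e₁ e₂ := by
  obtain ⟨u, hu⟩ := hω.exists_apply_eq hw (-1)
  obtain ⟨β, hβ⟩ := hω.exists_smul_eq hw (y := D u)
    (by rw [hω.swap, hD, Pi.neg_apply, hDw, neg_zero, map_zero, neg_zero])
  refine ⟨u, w, by simp [hu], -β, 0, Or.inl rfl, ?_, ?_, ?_⟩ <;> simp [hu, hDw, ← hβ]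

lemma IsAreaForm.exists_isBolTypeIIii_of_apply_eq_smul (hω : IsAreaForm ω)
    (hD : ω.IsSkewAdjoint D) {k : ℝ} (hD₂ : ∀ z, D (D z) = k • z) {w : V} {L : ℝ} (hw : w ≠ 0)
    (hL : L ≠ 0) (hDw : D w = L • w) :
    ∃ e₁ e₂ : V, ω e₁ e₂ ≠ 0 ∧ IsBolTypeIIii (ω e₁ e₂ • w) ⇑(ω e₁ e₂ • D) e₁ e₂ := by
  have hkL : k = L ^ 2 := by
    have h := hD₂ w
    rw [hDw, map_smul, hDw, smul_smul, ← sub_eq_zero, ← sub_smul] at h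
    linear_combination -(smul_eq_zero.1 h).resolve_right hw
  obtain ⟨y, hy⟩ := hω.exists_apply_eq hw (2 * L)⁻¹
  have hDg : D (D y - L • y) = -L • (D y - L • y) := by
    rw [map_sub, map_smul, hD₂, hkL]
    module
  have hδ : ω (D y - L • y) (L⁻¹ • w) = -L⁻¹ := by
    simp only [map_sub, map_smul, LinearMap.sub_apply, LinearMap.smul_apply, smul_eq_mul, hD y w,
      Pi.neg_apply, hDw, map_neg, hy]
    field_simp
    ring
  refine ⟨D y - L • y, L⁻¹ • w, by rw [hδ]; simpa using hL, ?_, ?_, ?_⟩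
  · rw [hδ]
    module
  · rw [LinearMap.smul_apply, hδ, hDg, smul_smul, neg_mul_neg, inv_mul_cancel₀ hL, one_smul]
  · rw [LinearMap.smul_apply, hδ, map_smul, hDw]
    match_scalars
    field_simp

lemma IsAreaForm.exists_isBolNormalForm [Nontrivial V] (hω : IsAreaForm ω)
    (hD : ω.IsSkewAdjoint D) (w : V) :
    ∃ e₁ e₂ : V, ω e₁ e₂ ≠ 0 ∧ IsBolNormalForm (ω e₁ e₂ • w) ⇑(ω e₁ e₂ • D) e₁ e₂ := by
  rcases eq_or_ne w 0 with rfl | hw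
  · simp only [smul_zero]
    exact (hω.exists_isBolTypeI hD).imp fun _ => .imp fun _ => .imp_right .inl
  obtain ⟨k, hk⟩ := hω.exists_forall_apply_apply_eq_smul hD
  by_cases hQ : ω w (D w) = 0
  · obtain ⟨L, hL⟩ := hω.exists_smul_eq hw hQ
    rcases eq_or_ne L 0 with rfl | hL₀
    · exact (hω.exists_isBolTypeIIi_of_apply_eq_zero hD hw (by simp [← hL])).imp
        fun _ => .imp fun _ => .imp_right (.inr ∘ .inl)
    · exact (hω.exists_isBolTypeIIii_of_apply_eq_smul hD hk hw hL₀ hL.symm).imp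
        fun _ => .imp fun _ => .imp_right (.inr ∘ .inr)
  · exact (hω.exists_isBolTypeIIi_of_apply_apply_ne_zero hk hQ).imp
      fun _ => .imp fun _ => .imp_right (.inr ∘ .inl)

end NormalForm

namespace LeftBolAlgebra

variable {T : Type*} [AddCommGroup T] [Module ℝ T] (A : LeftBolAlgebra T)

lemma mul_isAlt : A.mul.IsAlt :=
  have := IsAddTorsionFree.of_isTorsionFree ℝ T
  fun x => self_eq_neg.1 (A.mul_anticomm x x)

lemma tri_isAlt : A.tri.IsAlt :=
  have := IsAddTorsionFree.of_isTorsionFree ℝ T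
  fun x => LinearMap.ext fun z => self_eq_neg.1 (A.tri_skew x x z)

lemma isSkewAdjoint_tri {ω : T →ₗ[ℝ] T →ₗ[ℝ] ℝ} (hω : IsAreaForm ω) {a b : T} (hab : ω a b = 1) :
    ω.IsSkewAdjoint (A.tri a b) := by
  intro x y
  rw [Pi.neg_apply, map_neg, eq_neg_iff_add_eq_zero]
  set D := A.tri a b
  rcases eq_or_ne D 0 with hD | hD
  · simp [hD]
  obtain ⟨z, hz⟩ := DFunLike.ne_iff.1 hD
  have htri : ∀ x y, A.tri x y = ω x y • D := hω.apply_eq_smul A.tri_isAlt hab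
  have h := A.tri_leibniz a b x y z
  rw [htri x y, htri (D x) y, htri x (D y)] at h
  simp only [LinearMap.smul_apply, map_smul] at h
  have h' : (ω (D x) y + ω x (D y)) • D z = 0 := by linear_combination (norm := module) -h
  exact (smul_eq_zero.1 h').resolve_right hz

end LeftBolAlgebra

theorem two_dim_leftBol_classification
    {T : Type*} [AddCommGroup T] [Module ℝ T] (A : LeftBolAlgebra T)
    (hdim : Module.finrank ℝ T = 2) :
    ∃ e₁ e₂ : T, LinearIndependent ℝ ![e₁, e₂] ∧
      Submodule.span ℝ {e₁, e₂} = ⊤ ∧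
      ((∃ ε₁ ε₂ : ℝ,
          ((ε₁, ε₂) = ((0 : ℝ), (0 : ℝ)) ∨ (ε₁, ε₂) = (1, 0) ∨ (ε₁, ε₂) = (-1, 0) ∨
            (ε₁, ε₂) = (1, 1) ∨ (ε₁, ε₂) = (1, -1) ∨ (ε₁, ε₂) = (-1, -1)) ∧
          A.mul e₁ e₂ = 0 ∧ A.tri e₁ e₂ e₁ = ε₂ • e₂ ∧ A.tri e₁ e₂ e₂ = -ε₁ • e₁) ∨
        (∃ β ε : ℝ, (ε = 0 ∨ ε = 1 ∨ ε = -1) ∧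
          A.mul e₁ e₂ = -e₂ ∧ A.tri e₁ e₂ e₁ = β • e₂ ∧ A.tri e₁ e₂ e₂ = -ε • e₁) ∨
        (A.mul e₁ e₂ = -e₂ ∧ A.tri e₁ e₂ e₁ = e₁ ∧ A.tri e₁ e₂ e₂ = -e₂)) := by
  have : FiniteDimensional ℝ T := Module.finite_of_finrank_eq_succ hdim
  have : Nontrivial T := Module.nontrivial_of_finrank_eq_succ hdim
  let b := Module.finBasisOfFinrankEq ℝ T hdim
  have hω := b.isAreaForm_areaForm
  have hab := b.areaForm_apply_zero_one
  obtain ⟨e₁, e₂, he, hnormal⟩ :=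
    hω.exists_isBolNormalForm (A.isSkewAdjoint_tri hω hab) (A.mul (b 0) (b 1))
  refine ⟨e₁, e₂, hω.linearIndependent he, hω.span_eq_top he, ?_⟩
  rwa [hω.apply_eq_smul A.mul_isAlt hab, hω.apply_eq_smul A.tri_isAlt hab]
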